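/- arXiv:1509.01535 — 3 statements merged into one kernel-verified Lean document; each statement's English description precedes it below -/
import Mathlib

section
/- Let p be any prime and let k = m p^b + 1 with m, b ≥ 1 integers and p ∤ m. Then the binomial coefficient C(k, k − p^b) is not divisible by p, and for every integer n with k − p^b < n < k − 1, the binomial coefficient C(k, n) is divisible by p. In other words, k − p^b is the largest number less than k − 1 such that C(k, k − p^b) ≢ 0 (mod p). -/
/-!
Write `k = N + 1` with `N = m p^b`. If `0 < t < p^b`, then `p ∣ C(N, t)`: by
`t C(N, t) = N C(N - 1, t - 1)` the power `p^b` divides `t C(N, t)` but not `t`.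
Pascal's rule then gives `C(N + 1, j) ≡ C(N, j) (mod p)` for `1 < j ≤ p^b`, and we use it
with `j = k - n`. For `n = k - p^b` Lucas gives `C(p^b m, p^b) ≡ C(m, 1) = m`; for the
other `n` in the range `1 < j < p^b`, so `p ∣ C(N, j)`.
-/

namespace Nat

theorem Prime.dvd_choose_of_pow_dvd {p b n t : ℕ} (hp : p.Prime) (hn : p ^ b ∣ n)
    (ht0 : 0 < t) (ht : t < p ^ b) : p ∣ n.choose t := by
  obtain ⟨s, rfl⟩ : ∃ s, t = s + 1 := ⟨t - 1, by omega⟩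
  rcases n with _ | n
  · simp
  by_contra h
  have hcop : Coprime (p ^ b) ((n + 1).choose (s + 1)) :=
    (hp.coprime_iff_not_dvd.2 h).pow_left b
  have hdvd : p ^ b ∣ (n + 1).choose (s + 1) * (s + 1) :=
    add_one_mul_choose_eq n s ▸ hn.mul_right _
  exact ht.not_ge (le_of_dvd ht0 (hcop.dvd_of_dvd_mul_left hdvd))

theorem Prime.choose_succ_modEq_choose {p b n j : ℕ} (hp : p.Prime) (hn : p ^ b ∣ n)
    (hj1 : 1 < j) (hj : j ≤ p ^ b) : (n + 1).choose j ≡ n.choose j [MOD p] := by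
  obtain ⟨i, rfl⟩ : ∃ i, j = i + 1 := ⟨j - 1, by omega⟩
  have hi : n.choose i ≡ 0 [MOD p] :=
    modEq_zero_iff_dvd.2 (hp.dvd_choose_of_pow_dvd hn (by omega) (by omega))
  simpa [choose_succ_succ'] using hi.add_right (n.choose (i + 1))

end Nat

theorem choose_k_sub_pb_not_dvd_general (p m b k : ℕ) (hp : p.Prime) (hb : 1 ≤ b)
    (hpm : ¬ p ∣ m) (hk : k = m * p ^ b + 1) :
    ¬ p ∣ Nat.choose k (k - p ^ b) ∧
      ∀ n : ℕ, k - p ^ b < n → n < k - 1 → p ∣ Nat.choose k n := by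
  have : Fact p.Prime := ⟨hp⟩
  have hN : p ^ b ∣ m * p ^ b := dvd_mul_left _ _
  have hpb : 1 < p ^ b := Nat.one_lt_pow (by omega) hp.one_lt
  have hm : m ≠ 0 := by rintro rfl; exact hpm (dvd_zero p)
  subst hk
  constructor
  · have hlucas : (m * p ^ b).choose (p ^ b) ≡ m [MOD p] := by
      simpa [mul_comm] using
        Choose.choose_pow_mul_pow_mul_modEq_choose_nat (p := p) (k := b) (a := m) (b := 1)
    rw [Nat.choose_symm (le_add_right (Nat.le_mul_of_pos_left _ (Nat.pos_of_ne_zero hm)))]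
    rw [((hp.choose_succ_modEq_choose hN hpb le_rfl).trans hlucas).dvd_iff dvd_rfl]
    exact hpm
  · intro n hn1 hn2
    rw [← Nat.choose_symm (by omega : n ≤ m * p ^ b + 1),
      (hp.choose_succ_modEq_choose hN (by omega) (by omega)).dvd_iff dvd_rfl]
    exact hp.dvd_choose_of_pow_dvd hN (by omega) (by omega)

/-- For a prime `p` and `k = m·p^b + 1` with `m, b ≥ 1` and `p ∤ m`,
the binomial coefficient `C(k, k − p^b)` is not divisible by `p`, while `C(k, n)` is
divisible by `p` for every `n` with `k − p^b < n < k − 1`; that is, `k − p^b` is the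
largest number less than `k − 1` with `C(k, k − p^b) ≢ 0 (mod p)`. -/
theorem choose_k_sub_pb_not_dvd (p m b k : ℕ) (hp : p.Prime) (hm : 1 ≤ m) (hb : 1 ≤ b)
    (hpm : ¬ p ∣ m) (hk : k = m * p ^ b + 1) :
    ¬ p ∣ Nat.choose k (k - p ^ b) ∧
      ∀ n : ℕ, k - p ^ b < n → n < k - 1 → p ∣ Nat.choose k n :=
  choose_k_sub_pb_not_dvd_general p m b k hp hb hpm hk
end

section
/- Let p be a prime and let k ≥ 3 be an integer with p ∤ k. Then the set ℛ = {1, 2, …, j_0} ∪ {k−1, k} satisfies the following condition: for every l ∈ ℕ with l ≥ 1, if there exists j ∈ ℛ such that p does not divide the binomial coefficient C(j, l), then l ∈ ℛ. -/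
open scoped Classical

noncomputable section

namespace FFW

/-- `j_0 = j_0(k)`: the largest `j` with `0 < j < k`, `p ∤ j` and `p ∤ C(k, j)`. -/
def j0 (p k : ℕ) : ℕ :=
  Nat.findGreatest (fun j => 0 < j ∧ ¬ p ∣ j ∧ ¬ p ∣ Nat.choose k j) (k - 1)

/-- The set `ℛ = {1, 2, …, j_0} ∪ {k−1, k}`. -/
def Rset (p k : ℕ) : Finset ℕ := Finset.Icc 1 (j0 p k) ∪ {k - 1, k}

/-- The set `ℛ' = {j ∈ ℕ : p ∤ j and p^v j ∈ ℛ for some v ≥ 0}` (its elements all lie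
in `{1, …, k}`). -/
def R'set (p k : ℕ) : Finset ℕ :=
  (Finset.Icc 1 k).filter fun j => ¬ p ∣ j ∧ ∃ v : ℕ, p ^ v * j ∈ Rset p k

lemma le_of_not_dvd_choose {p j l : ℕ} (h : ¬ p ∣ Nat.choose j l) : l ≤ j := by
  by_contra hlt
  exact h (by rw [Nat.choose_eq_zero_of_lt (by omega)]; exact dvd_zero p)

lemma mem_Rset_of_le_j0 {p k l : ℕ} (h1 : 1 ≤ l) (h2 : l ≤ j0 p k) : l ∈ Rset p k := by
  exact Finset.mem_union_left _ (Finset.mem_Icc.mpr ⟨h1, h2⟩)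

lemma km1_mem_Rset (p k : ℕ) : k - 1 ∈ Rset p k := by
  apply Finset.mem_union_right
  simp

lemma k_mem_Rset (p k : ℕ) : k ∈ Rset p k := by
  apply Finset.mem_union_right
  simp

/-- Core case: if `1 ≤ l ≤ k` and `p ∤ C(k, l)`, then `l ∈ ℛ`. -/
lemma key (p k : ℕ) (hp : p.Prime) (hk : 3 ≤ k) (hpk : ¬ p ∣ k)
    (l : ℕ) (hl1 : 1 ≤ l) (hlk : l ≤ k) (hdvd : ¬ p ∣ Nat.choose k l) :
    l ∈ Rset p k := by
  haveI : Fact p.Prime := ⟨hp⟩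
  rcases eq_or_lt_of_le hlk with rfl | hlt
  · exact k_mem_Rset p l
  rcases Nat.eq_or_lt_of_le (Nat.le_pred_of_lt hlt) with h | hlt2
  · rw [h, Nat.pred_eq_sub_one]; exact km1_mem_Rset p k
  rw [Nat.pred_eq_sub_one] at hlt2
  -- now 1 ≤ l ≤ k - 2
  obtain ⟨a, ha_def⟩ : ∃ a, a = k % p := ⟨_, rfl⟩
  have hppos : 0 < p := hp.pos
  have ha1 : 1 ≤ a := by
    have hne : k % p ≠ 0 := fun h => hpk (Nat.dvd_iff_mod_eq_zero.mpr h)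
    omega
  have hap : a < p := ha_def ▸ Nat.mod_lt _ hppos
  have hkeq : p * (k / p) + a = k := by rw [ha_def]; exact Nat.div_add_mod k p
  by_cases hpl : p ∣ l
  · -- p ∣ l : shift to l + a
    obtain ⟨m, hm⟩ := hpl
    have hldiv : l / p = m := by rw [hm, Nat.mul_div_cancel_left _ hppos]
    have hdivle : l / p ≤ k / p := Nat.div_le_div_right hlt.le
    -- l + a ≤ k
    have hla : l + a ≤ k := by
      rcases lt_or_eq_of_le hdivle with hd | hd
      · have h2 : p * (l / p + 1) ≤ p * (k / p) := Nat.mul_le_mul_left p hd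
        have h4 : p * (l / p + 1) = p * (l / p) + p := Nat.mul_succ p (l / p)
        have h3 : p * (l / p) = l := by rw [hldiv, ← hm]
        omega
      · have h3 : p * (l / p) = p * (k / p) := by rw [hd]
        have h5 : p * (l / p) = l := by rw [hldiv, ← hm]
        omega
    -- Lucas congruences
    have hlosmod : l % p = 0 := by rw [hm, Nat.mul_mod_right]
    have hlamod : (l + a) % p = a := by
      rw [Nat.add_mod, hlosmod, Nat.zero_add, Nat.mod_eq_of_lt hap, Nat.mod_eq_of_lt hap]
    have hladiv : (l + a) / p = l / p := by
      rw [hm, Nat.mul_add_div hppos, Nat.div_eq_of_lt hap, Nat.add_zero,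
        Nat.mul_div_cancel_left _ hppos]
    have hc1 : Nat.choose k l ≡ Nat.choose (k / p) (l / p) [MOD p] := by
      have := Choose.choose_modEq_choose_mod_mul_choose_div_nat (n := k) (k := l) (p := p)
      rwa [hlosmod, Nat.choose_zero_right, one_mul] at this
    have hc2 : Nat.choose k (l + a) ≡ Nat.choose (k / p) (l / p) [MOD p] := by
      have := Choose.choose_modEq_choose_mod_mul_choose_div_nat (n := k) (k := l + a) (p := p)
      rwa [← ha_def, hlamod, Nat.choose_self, one_mul, hladiv] at this
    have hdvd' : ¬ p ∣ Nat.choose k (l + a) := by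
      intro hd
      apply hdvd
      have hmods : Nat.choose k l % p = Nat.choose k (l + a) % p := hc1.trans hc2.symm
      rw [Nat.dvd_iff_mod_eq_zero] at hd ⊢
      omega
    rcases lt_or_eq_of_le hla with hlalt | hlaeq
    · -- l + a ≤ k - 1, so j0 ≥ l + a
      have hj0 : l + a ≤ j0 p k := by
        apply Nat.le_findGreatest (by omega)
        refine ⟨by omega, ?_, hdvd'⟩
        intro hd
        rw [Nat.dvd_iff_mod_eq_zero, hlamod] at hd
        omega
      exact mem_Rset_of_le_j0 hl1 (by omega)
    · -- l + a = k, so a ≥ 2 and k - 1 works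
      have ha2 : 2 ≤ a := by omega
      have hkm1mod : (k - 1) % p = a - 1 := by
        have h6 : k - 1 = p * (k / p) + (a - 1) := by omega
        rw [h6, Nat.mul_add_mod, Nat.mod_eq_of_lt (by omega)]
      have hj0 : k - 1 ≤ j0 p k := by
        apply Nat.le_findGreatest (le_refl _)
        refine ⟨by omega, ?_, ?_⟩
        · intro hd
          rw [Nat.dvd_iff_mod_eq_zero, hkm1mod] at hd
          omega
        · have hck : Nat.choose k (k - 1) = k := by
            have h := Nat.choose_symm (show 1 ≤ k by omega)
            rwa [Nat.choose_one_right] at h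
          rw [hck]; exact hpk
      exact mem_Rset_of_le_j0 hl1 (by omega)
  · -- p ∤ l : l itself witnesses j0 ≥ l
    have hj0 : l ≤ j0 p k := Nat.le_findGreatest (by omega) ⟨by omega, hpl, hdvd⟩
    exact mem_Rset_of_le_j0 hl1 hj0

/-- For a prime `p` and `k ≥ 3` with `p ∤ k`, the set
`ℛ = {1, …, j₀} ∪ {k−1, k}` satisfies Condition*: for every `l ≥ 1`, if some `j ∈ ℛ`
has `p ∤ C(j, l)`, then `l ∈ ℛ`. -/
theorem Rset_condition_star (p k : ℕ) (hp : p.Prime) (hk : 3 ≤ k) (hpk : ¬ p ∣ k) :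
    ∀ l : ℕ, 1 ≤ l → (∃ j ∈ Rset p k, ¬ p ∣ Nat.choose j l) → l ∈ Rset p k := by
  intro l hl1 ⟨j, hj, hjl⟩
  have hlj : l ≤ j := le_of_not_dvd_choose hjl
  rw [Rset, Finset.mem_union] at hj
  rcases hj with hj | hj
  · -- j ∈ Icc 1 j0 : then l ≤ j0
    rw [Finset.mem_Icc] at hj
    exact mem_Rset_of_le_j0 hl1 (le_trans hlj hj.2)
  · simp only [Finset.mem_insert, Finset.mem_singleton] at hj
    rcases hj with rfl | rfl
    · -- j = k - 1 : transfer to C(k, l)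
      have hid : Nat.choose (k - 1) l * k = Nat.choose k l * (k - l) := by
        have h := Nat.choose_mul_succ_eq (k - 1) l
        have hk1 : k - 1 + 1 = k := by omega
        rwa [hk1] at h
      have hdvd : ¬ p ∣ Nat.choose k l := by
        intro hd
        have : p ∣ Nat.choose (k - 1) l * k := hid ▸ Dvd.dvd.mul_right hd _
        rcases (Nat.Prime.dvd_mul hp).mp this with h | h
        · exact hjl h
        · exact hpk h
      exact key p k hp hk hpk l hl1 (by omega) hdvd
    · exact key p j hp hk hpk l hl1 hlj hjl

end FFW
end
end

section
/- Let 𝔽_q have characteristic p and let k ≥ 1 have base-p expansion k = c_v p^v + ⋯ + c_1 p + c_0 with 0 ≤ c_i < p and c_v ≠ 0, and set h₀ = c_v + ⋯ + c_0. Then in the polynomial ring 𝔽_q[t][u, z_1, …, z_{h₀}] the iterated difference Δ_{z_{h₀}} ⋯ Δ_{z_1}(u^k) is nonzero, while in 𝔽_q[t][u, z_1, …, z_{h₀+1}] the iterated difference Δ_{z_{h₀+1}} ⋯ Δ_{z_1}(u^k) is zero. -/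
noncomputable section

namespace FFW

open Finset MvPolynomial

section NumberTheory

variable {p : ℕ} [hp : Fact p.Prime]


lemma digitSum_pow (j : ℕ) : (p.digits (p ^ j)).sum = 1 := by
  induction j with
  | zero =>
    rw [pow_zero, Nat.digits_def' hp.out.one_lt Nat.one_pos]
    simp [Nat.mod_eq_of_lt hp.out.one_lt, Nat.div_eq_of_lt hp.out.one_lt]
  | succ j ih =>
    rw [Nat.digits_def' hp.out.one_lt (pow_pos hp.out.pos _), pow_succ',
      Nat.mul_mod_right, Nat.mul_div_cancel_left _ hp.out.pos]
    simpa using ih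

lemma one_le_digitSum {n : ℕ} (hn : 1 ≤ n) : 1 ≤ (p.digits n).sum := by
  induction n using Nat.strong_induction_on with
  | _ n ih =>
    rw [Nat.digits_def' hp.out.one_lt hn]
    rcases Nat.eq_zero_or_pos (n % p) with h | h
    · have hd : p ∣ n := Nat.dvd_of_mod_eq_zero h
      have h1 : 1 ≤ n / p := Nat.one_le_div_iff hp.out.pos |>.2 (Nat.le_of_dvd hn hd)
      have h2 : n / p < n := Nat.div_lt_self hn hp.out.one_lt
      simpa [h] using ih _ h2 h1
    · simp only [List.sum_cons]
      omega

lemma padicValNat_prod {ι : Type*} (s : Finset ι) (f : ι → ℕ) (hf : ∀ i ∈ s, f i ≠ 0) :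
    padicValNat p (∏ i ∈ s, f i) = ∑ i ∈ s, padicValNat p (f i) := by
  classical
  induction s using Finset.cons_induction with
  | empty => simp
  | cons a s ha ih =>
    rw [prod_cons, sum_cons, padicValNat.mul (hf a (mem_cons_self a s))
      (Finset.prod_ne_zero_iff.2 fun i hi => hf i (mem_cons_of_mem hi)),
      ih fun i hi => hf i (mem_cons_of_mem hi)]

/-- Legendre/Kummer for multinomial coefficients. -/
lemma multinomial_val {ι : Type*} (s : Finset ι) (f : ι → ℕ) :
    ((p - 1) * padicValNat p (Nat.multinomial s f) : ℤ) =
      (∑ i ∈ s, ((p.digits (f i)).sum : ℤ)) - ((p.digits (∑ i ∈ s, f i)).sum : ℤ) := by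
  have spec := Nat.multinomial_spec s f
  have h1 : padicValNat p (∏ i ∈ s, Nat.factorial (f i)) + padicValNat p (Nat.multinomial s f)
      = padicValNat p (Nat.factorial (∑ i ∈ s, f i)) := by
    rw [← padicValNat.mul (Finset.prod_ne_zero_iff.2 fun i _ => (Nat.factorial_ne_zero _))
      (Nat.multinomial_pos s f).ne', spec]
  have h2 := padicValNat_prod (p := p) s (fun i => Nat.factorial (f i))
    (fun i _ => Nat.factorial_ne_zero _)
  have leg : ∀ n : ℕ, ((p-1) * padicValNat p (Nat.factorial n) : ℤ)
      = (n : ℤ) - ((p.digits n).sum : ℤ) := by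
    intro n
    have h := sub_one_mul_padicValNat_factorial (p := p) n
    have hle := Nat.digit_sum_le p n
    have := congrArg (Nat.cast : ℕ → ℤ) h
    push_cast [Nat.cast_sub hle, Nat.cast_sub hp.out.one_le] at this
    push_cast [Nat.cast_sub hp.out.one_le]
    linarith
  have key := congrArg (fun n : ℕ => ((p:ℤ) - 1) * (n : ℤ)) h1
  simp only [h2, Nat.cast_add, Nat.cast_sum, mul_add, Finset.mul_sum] at key
  have e1 : ∀ i ∈ s, ((p:ℤ) - 1) * (padicValNat p (Nat.factorial (f i)) : ℤ)
      = (f i : ℤ) - ((p.digits (f i)).sum : ℤ) := by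
    intro i _
    have := leg (f i); push_cast [Nat.cast_sub hp.out.one_le] at this ⊢; linarith
  rw [Finset.sum_congr rfl e1, leg (∑ i ∈ s, f i), Finset.sum_sub_distrib] at key
  simp only [Nat.cast_sum] at key
  linarith

lemma dvd_multinomial_iff {ι : Type*} (s : Finset ι) (f : ι → ℕ) :
    p ∣ Nat.multinomial s f ↔
      ∑ i ∈ s, (p.digits (f i)).sum ≠ (p.digits (∑ i ∈ s, f i)).sum := by
  have hmv := multinomial_val (p := p) s f
  have hne : Nat.multinomial s f ≠ 0 := (Nat.multinomial_pos s f).ne'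
  have hval : p ∣ Nat.multinomial s f ↔ padicValNat p (Nat.multinomial s f) ≠ 0 := by
    rw [Ne, padicValNat.eq_zero_iff]
    simp [hp.out.ne_one, hne]
  rw [hval]
  have hcast : ((∑ i ∈ s, (p.digits (f i)).sum : ℕ) : ℤ)
      = ∑ i ∈ s, ((p.digits (f i)).sum : ℤ) := by push_cast; rfl
  constructor
  · intro h0 heq
    have : ((∑ i ∈ s, (p.digits (f i)).sum : ℕ) : ℤ)
        = ((p.digits (∑ i ∈ s, f i)).sum : ℤ) := by exact_mod_cast heq
    rw [hcast] at this
    rw [this, sub_self] at hmv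
    have hp1 : (1:ℤ) < (p:ℤ) := by exact_mod_cast hp.out.one_lt
    have : (padicValNat p (Nat.multinomial s f) : ℤ) = 0 := by
      rcases mul_eq_zero.1 hmv with h | h
      · linarith
      · exact h
    exact h0 (by exact_mod_cast this)
  · intro hne2 h0
    rw [h0] at hmv
    simp only [Nat.cast_zero, mul_zero] at hmv
    apply hne2
    have : (∑ i ∈ s, ((p.digits (f i)).sum :ℤ)) = ((p.digits (∑ i ∈ s, f i)).sum : ℤ) := by
      linarith
    rw [← hcast] at this
    exact_mod_cast this


def FFWparts (p : ℕ) : List ℕ → ℕ → List ℕ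
  | [], _ => []
  | c :: L, j => List.replicate c (p ^ j) ++ FFWparts p L (j + 1)

lemma FFWparts_sum (p : ℕ) (L : List ℕ) (j : ℕ) :
    (FFWparts p L j).sum = p ^ j * Nat.ofDigits p L := by
  induction L generalizing j with
  | nil => simp [FFWparts]
  | cons c L ih =>
    rw [FFWparts, List.sum_append, List.sum_replicate, ih, Nat.ofDigits_cons]
    push_cast
    ring

lemma FFWparts_length (p : ℕ) (L : List ℕ) (j : ℕ) :
    (FFWparts p L j).length = L.sum := by
  induction L generalizing j with
  | nil => simp [FFWparts]
  | cons c L ih => rw [FFWparts, List.length_append, List.length_replicate, ih, List.sum_cons]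

lemma FFWparts_mem (p : ℕ) (L : List ℕ) (j : ℕ) {x : ℕ} (hx : x ∈ FFWparts p L j) :
    ∃ w, x = p ^ w := by
  induction L generalizing j with
  | nil => simp [FFWparts] at hx
  | cons c L ih =>
    rw [FFWparts, List.mem_append] at hx
    rcases hx with hx | hx
    · exact ⟨j, (List.eq_of_mem_replicate hx)⟩
    · exact ih _ hx

lemma sum_range_getD (E : List ℕ) : ∑ i ∈ Finset.range E.length, E.getD i 0 = E.sum := by
  induction E with
  | nil => simp
  | cons c E ih =>
    rw [List.length_cons, Finset.sum_range_succ', List.sum_cons]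
    simp only [List.getD_cons_succ, List.getD_cons_zero]
    rw [ih, Nat.add_comm]

end NumberTheory

variable (F : Type) [Field F]

/-- The iterated Weyl difference of `w ∈ 𝔽_q[t][u]`, viewed inside
`𝔽_q[t][u, z_1, z_2, …]` (modelled as `MvPolynomial ℕ (𝔽_q[t])`, where variable `0`
is `u` and variable `i ≥ 1` is `z_i`): `iterDiff w 0 = w(u)` and
`iterDiff w (h+1) = (iterDiff w h)(u + z_{h+1}, z_1, …, z_h) − (iterDiff w h)(u, z_1, …, z_h)`,
i.e. `Δ_{z_{h+1}} ⋯ Δ_{z_1} w`. -/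
def iterDiff (w : MvPolynomial ℕ (Polynomial F)) : ℕ → MvPolynomial ℕ (Polynomial F)
  | 0 => w
  | h + 1 =>
      MvPolynomial.bind₁
        (fun i => if i = 0 then MvPolynomial.X 0 + MvPolynomial.X (h + 1) else MvPolynomial.X i)
        (iterDiff w h) - iterDiff w h

lemma iterDiff_pow_eq (k h : ℕ) :
    iterDiff F ((X 0 : MvPolynomial ℕ (Polynomial F)) ^ k) h =
      ∑ S ∈ (Finset.range h).powerset,
        (-1 : MvPolynomial ℕ (Polynomial F)) ^ (h - S.card) *
          (∑ i ∈ insert 0 (S.image Nat.succ), X i) ^ k := by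
  induction h with
  | zero => simp [iterDiff]
  | succ h ih =>
    have hnot : h ∉ Finset.range h := by simp
    rw [iterDiff, ih, Finset.range_add_one, Finset.sum_powerset_insert hnot, map_sum]
    have step : ∀ S ∈ (Finset.range h).powerset,
        (bind₁ fun i => if i = 0 then (X 0 : MvPolynomial ℕ (Polynomial F)) + X (h + 1) else X i)
            ((-1 : MvPolynomial ℕ (Polynomial F)) ^ (h - S.card) *
              (∑ i ∈ insert 0 (S.image Nat.succ), X i) ^ k)
          = (-1 : MvPolynomial ℕ (Polynomial F)) ^ ((h+1) - (insert h S).card) *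
              (∑ i ∈ insert 0 ((insert h S).image Nat.succ), X i) ^ k := by
      intro S hS
      rw [Finset.mem_powerset] at hS
      have hS0 : h ∉ S := fun hc => hnot (hS hc)
      have hcard : (insert h S).card = S.card + 1 := Finset.card_insert_of_notMem hS0
      have hcards : S.card ≤ h := by
        simpa using Finset.card_le_card hS
      have hins : Nat.succ h ∉ S.image Nat.succ := by
        simp only [Finset.mem_image, not_exists, not_and]
        intro x hx hxe
        apply hS0
        have : x = h := by omega
        exact this ▸ hx
      rw [map_mul, map_pow, map_neg, map_one, map_pow, map_sum]
      congr 2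
      · omega
      · rw [Finset.sum_insert (by simp), Finset.sum_insert (by simp),
          bind₁_X_right, if_pos rfl, Finset.image_insert, Finset.sum_insert hins]
        have : ∀ i ∈ S.image Nat.succ,
            (bind₁ fun i => if i = 0 then (X 0 : MvPolynomial ℕ (Polynomial F)) + X (h + 1)
              else X i) (X i) = X i := by
          intro i hi
          rw [bind₁_X_right, if_neg]
          simp only [Finset.mem_image] at hi
          obtain ⟨x, _, rfl⟩ := hi
          exact Nat.succ_ne_zero x
        rw [Finset.sum_congr rfl this]
        simp only [Nat.succ_eq_add_one]
        ring
    rw [Finset.sum_congr rfl step]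
    have step2 : ∀ S ∈ (Finset.range h).powerset,
        (-1 : MvPolynomial ℕ (Polynomial F)) ^ ((h+1) - S.card) *
          (∑ i ∈ insert 0 (S.image Nat.succ), X i) ^ k
        = -((-1 : MvPolynomial ℕ (Polynomial F)) ^ (h - S.card) *
          (∑ i ∈ insert 0 (S.image Nat.succ), X i) ^ k) := by
      intro S hS
      rw [Finset.mem_powerset] at hS
      have hcards : S.card ≤ h := by simpa using Finset.card_le_card hS
      have hex : (h+1) - S.card = (h - S.card) + 1 := by omega
      rw [hex, pow_succ]
      ring
    rw [Finset.sum_congr rfl step2, Finset.sum_neg_distrib]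
    ring

variable {F}

lemma multinomial_subset {T : Finset ℕ} (d : ℕ →₀ ℕ) (h : d.support ⊆ T) :
    Nat.multinomial T ⇑d = Nat.multinomial d.support ⇑d := by
  unfold Nat.multinomial
  rw [Finset.sum_subset h (fun x _ hx => Finsupp.notMem_support_iff.1 hx),
    Finset.prod_subset h (fun x _ hx => by
      rw [Finsupp.notMem_support_iff.1 hx]; rfl)]

lemma prod_X_pow_eq (T : Finset ℕ) (f : ℕ → ℕ) :
    (∏ i ∈ T, (X i : MvPolynomial ℕ (Polynomial F)) ^ f i) =
      monomial (∑ i ∈ T, Finsupp.single i (f i)) 1 := by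
  classical
  induction T using Finset.cons_induction with
  | empty => simp
  | cons a T ha ih =>
    rw [Finset.prod_cons, Finset.sum_cons, ih, X_pow_eq_monomial, monomial_mul, one_mul]

lemma sum_single_apply (T : Finset ℕ) (f : ℕ → ℕ) (j : ℕ) :
    (∑ i ∈ T, Finsupp.single i (f i)) j = if j ∈ T then f j else 0 := by
  classical
  rw [Finset.sum_apply']
  simp only [Finsupp.single_apply]
  rw [Finset.sum_ite_eq' T j f]

lemma coeff_sum_X_pow (T : Finset ℕ) (k : ℕ) (d : ℕ →₀ ℕ) :
    MvPolynomial.coeff d ((∑ i ∈ T, X i : MvPolynomial ℕ (Polynomial F)) ^ k) =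
      if d.support ⊆ T ∧ (d.sum fun _ n => n) = k
      then (Nat.multinomial d.support ⇑d : Polynomial F) else 0 := by
  classical
  rw [Finset.sum_pow_eq_sum_piAntidiag, MvPolynomial.coeff_sum]
  have hterm : ∀ f : ℕ → ℕ,
      MvPolynomial.coeff d ((Nat.multinomial T f : MvPolynomial ℕ (Polynomial F)) *
        ∏ i ∈ T, X i ^ f i)
      = if (∑ i ∈ T, Finsupp.single i (f i)) = d
        then (Nat.multinomial T f : Polynomial F) else 0 := by
    intro f
    rw [prod_X_pow_eq, ← MvPolynomial.C_eq_coe_nat, coeff_C_mul, coeff_monomial]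
    split <;> simp [MvPolynomial.C_eq_coe_nat]
  rw [Finset.sum_congr rfl fun f _ => hterm f]
  by_cases hd : d.support ⊆ T ∧ (d.sum fun _ n => n) = k
  · rw [if_pos hd]
    obtain ⟨hsupp, hsum⟩ := hd
    have hsum' : ∑ i ∈ T, d i = k := by
      rw [← hsum, Finsupp.sum]
      exact (Finset.sum_subset hsupp fun x _ hx => Finsupp.notMem_support_iff.1 hx).symm
    have hmem : ⇑d ∈ Finset.piAntidiag T k := by
      rw [Finset.mem_piAntidiag]
      exact ⟨hsum', fun i hi => hsupp (Finsupp.mem_support_iff.2 hi)⟩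
    rw [Finset.sum_eq_single_of_mem ⇑d hmem]
    · have heq : (∑ i ∈ T, Finsupp.single i (d i)) = d := by
        ext j
        rw [sum_single_apply]
        split
        · rfl
        · exact (Finsupp.notMem_support_iff.1 (fun hc => ‹j ∉ T› (hsupp hc))).symm
      rw [if_pos heq, multinomial_subset d hsupp]
    · intro f hf hne
      rw [if_neg]
      intro hc
      apply hne
      funext j
      rw [Finset.mem_piAntidiag] at hf
      by_cases hj : j ∈ T
      · have := congrArg (fun g : ℕ →₀ ℕ => g j) hc
        simpa [sum_single_apply, hj] using this
      · rw [not_imp_comm.1 (hf.2 j) hj]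
        exact (Finsupp.notMem_support_iff.1 (fun hc2 => hj (hsupp hc2))).symm
  · rw [if_neg hd]
    apply Finset.sum_eq_zero
    intro f hf
    rw [Finset.mem_piAntidiag] at hf
    rw [if_neg]
    intro hc
    apply hd
    have happ : ∀ j, d j = if j ∈ T then f j else 0 := by
      intro j
      rw [← hc, sum_single_apply]
    have hsupp : d.support ⊆ T := by
      intro j hj
      rw [Finsupp.mem_support_iff] at hj
      by_contra hjT
      exact hj (by rw [happ j, if_neg hjT])
    refine ⟨hsupp, ?_⟩
    rw [Finsupp.sum]
    rw [Finset.sum_subset hsupp fun x _ hx => Finsupp.notMem_support_iff.1 hx, ← hf.1]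
    apply Finset.sum_congr rfl
    intro j hj
    rw [happ j, if_pos hj]

lemma alt_sum_powerset {A : Type*} [CommRing A] (W : Finset ℕ) :
    ∑ T ∈ W.powerset, (-1 : A) ^ (W.card - T.card) = if W = ∅ then 1 else 0 := by
  classical
  have h := Finset.prod_add (fun _ : ℕ => (1 : A)) (fun _ => (-1 : A)) W
  simp only [Finset.prod_const_one, one_mul, Finset.prod_const] at h
  have h2 : ∀ T ∈ W.powerset, ((-1 : A)) ^ (W \ T).card = (-1 : A) ^ (W.card - T.card) := by
    intro T hT
    rw [Finset.card_sdiff_of_subset (Finset.mem_powerset.1 hT)]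
  rw [Finset.sum_congr rfl h2] at h
  rw [← h]
  have : (1 : A) + -1 = 0 := by ring
  rw [this, zero_pow_eq]
  simp [Finset.card_eq_zero]

lemma alt_sum {A : Type*} [CommRing A] (U V : Finset ℕ) (hV : V ⊆ U) :
    ∑ S ∈ U.powerset.filter (fun S => V ⊆ S), (-1 : A) ^ (U.card - S.card)
      = if V = U then 1 else 0 := by
  classical
  have hbij : ∑ S ∈ U.powerset.filter (fun S => V ⊆ S), (-1 : A) ^ (U.card - S.card)
      = ∑ T ∈ (U \ V).powerset, (-1 : A) ^ ((U \ V).card - T.card) := by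
    apply Finset.sum_nbij' (fun S => S \ V) (fun T => T ∪ V)
    · intro S hS
      simp only [Finset.mem_filter, Finset.mem_powerset] at hS
      exact Finset.mem_powerset.2 (Finset.sdiff_subset_sdiff hS.1 le_rfl)
    · intro T hT
      simp only [Finset.mem_powerset] at hT
      simp only [Finset.mem_filter, Finset.mem_powerset]
      constructor
      · exact Finset.union_subset (hT.trans (Finset.sdiff_subset)) hV
      · exact Finset.subset_union_right
    · intro S hS
      simp only [Finset.mem_filter, Finset.mem_powerset] at hS
      rw [Finset.sdiff_union_self_eq_union, Finset.union_eq_left.2 hS.2]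
    · intro T hT
      simp only [Finset.mem_powerset] at hT
      rw [Finset.union_sdiff_right, Finset.sdiff_eq_self_iff_disjoint.2]
      exact Finset.disjoint_of_subset_left hT Finset.sdiff_disjoint
    · intro S hS
      simp only [Finset.mem_filter, Finset.mem_powerset] at hS
      congr 1
      rw [Finset.card_sdiff_of_subset hV, Finset.card_sdiff_of_subset hS.2]
      have h1 := Finset.card_le_card hS.1
      have h2 := Finset.card_le_card hS.2
      have h3 := Finset.card_le_card hV
      omega
  rw [hbij, alt_sum_powerset]
  congr 1
  apply propext
  rw [Finset.sdiff_eq_empty_iff_subset]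
  exact ⟨fun h => subset_antisymm hV h, fun h => le_of_eq h.symm⟩

lemma coeff_iterDiff (k h : ℕ) (d : ℕ →₀ ℕ) :
    MvPolynomial.coeff d (iterDiff F ((X 0 : MvPolynomial ℕ (Polynomial F)) ^ k) h) =
      if (d.sum fun _ n => n) = k ∧ (d.support.erase 0).image Nat.pred = Finset.range h
      then (Nat.multinomial d.support ⇑d : Polynomial F) else 0 := by
  classical
  set V := (d.support.erase 0).image Nat.pred with hV
  have hiff : ∀ S : Finset ℕ, d.support ⊆ insert 0 (S.image Nat.succ) ↔ V ⊆ S := by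
    intro S
    constructor
    · intro hsub x hx
      simp only [hV, Finset.mem_image, Finset.mem_erase] at hx
      obtain ⟨w, ⟨hw0, hwsupp⟩, rfl⟩ := hx
      have := hsub hwsupp
      rcases Finset.mem_insert.1 this with h0 | hmem
      · exact absurd h0 hw0
      · simp only [Finset.mem_image] at hmem
        obtain ⟨y, hy, hye⟩ := hmem
        have : y = Nat.pred w := by rw [← hye, Nat.pred_succ]
        exact this ▸ hy
    · intro hsub w hw
      by_cases hw0 : w = 0
      · subst hw0; exact Finset.mem_insert_self 0 _
      · apply Finset.mem_insert_of_mem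
        have hmem : Nat.pred w ∈ V := by
          simp only [hV, Finset.mem_image, Finset.mem_erase]
          exact ⟨w, ⟨hw0, hw⟩, rfl⟩
        simp only [Finset.mem_image]
        exact ⟨Nat.pred w, hsub hmem, Nat.succ_pred_eq_of_pos (Nat.pos_of_ne_zero hw0)⟩
  rw [iterDiff_pow_eq, MvPolynomial.coeff_sum]
  have hterm : ∀ S ∈ (Finset.range h).powerset,
      MvPolynomial.coeff d ((-1 : MvPolynomial ℕ (Polynomial F)) ^ (h - S.card) *
        (∑ i ∈ insert 0 (S.image Nat.succ), X i) ^ k)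
      = if V ⊆ S ∧ (d.sum fun _ n => n) = k
        then (-1 : Polynomial F) ^ (h - S.card) * (Nat.multinomial d.support ⇑d : Polynomial F)
        else 0 := by
    intro S _
    have hC : ((-1 : MvPolynomial ℕ (Polynomial F)) ^ (h - S.card))
        = C ((-1 : Polynomial F) ^ (h - S.card)) := by
      rw [map_pow, map_neg, map_one]
    rw [hC, coeff_C_mul, coeff_sum_X_pow, mul_ite, mul_zero]
    by_cases hc : V ⊆ S ∧ (d.sum fun _ n => n) = k
    · rw [if_pos hc, if_pos ⟨(hiff S).2 hc.1, hc.2⟩]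
    · rw [if_neg (fun hcc => hc ⟨(hiff S).1 hcc.1, hcc.2⟩), if_neg hc]
  rw [Finset.sum_congr rfl hterm]
  by_cases hsum : (d.sum fun _ n => n) = k
  · simp only [hsum, eq_self_iff_true, true_and, and_true]
    rw [← Finset.sum_filter]
    rw [← Finset.sum_mul]
    by_cases hVU : V ⊆ Finset.range h
    · have halt := alt_sum (A := Polynomial F) (Finset.range h) V hVU
      rw [Finset.card_range] at halt
      rw [halt]
      by_cases hVeq : V = Finset.range h
      · rw [if_pos hVeq, one_mul, if_pos hVeq]
      · rw [if_neg hVeq, zero_mul, if_neg hVeq]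
    · have hempty : (Finset.range h).powerset.filter (fun S => V ⊆ S) = ∅ := by
        rw [Finset.filter_eq_empty_iff]
        intro S hS hc
        exact hVU (hc.trans (Finset.mem_powerset.1 hS))
      rw [hempty, Finset.sum_empty, zero_mul, if_neg]
      intro hVeq
      exact hVU (le_of_eq hVeq)
  · rw [if_neg (by tauto)]
    apply Finset.sum_eq_zero
    intro S _
    rw [if_neg (by tauto)]


/-- Let `𝔽_q` have characteristic `p` and let `k ≥ 1` have base-`p`
digit sum `h₀`.  Then the iterated Weyl difference `Δ_{z_{h₀}} ⋯ Δ_{z_1}(u^k)` is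
nonzero, while `Δ_{z_{h₀+1}} ⋯ Δ_{z_1}(u^k)` vanishes. -/
theorem iterDiff_pow_digitSum (p q k : ℕ) (F : Type) [Field F] [Fintype F] [Fact p.Prime]
    [CharP F p] (hq : Fintype.card F = q) (hk : 1 ≤ k) :
    iterDiff F ((MvPolynomial.X 0 : MvPolynomial ℕ (Polynomial F)) ^ k)
        ((Nat.digits p k).sum) ≠ 0 ∧
      iterDiff F ((MvPolynomial.X 0 : MvPolynomial ℕ (Polynomial F)) ^ k)
        ((Nat.digits p k).sum + 1) = 0 := by
  classical
  haveI : CharP (Polynomial F) p := by infer_instance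
  set s := (Nat.digits p k).sum with hs
  constructor
  · -- nonzero part
    set E := FFWparts p (p.digits k) 0 with hE
    have hEs : E.length = s := by rw [hE, FFWparts_length, hs]
    have hEsum : E.sum = k := by
      rw [hE, FFWparts_sum, pow_zero, one_mul, Nat.ofDigits_digits]
    have hmem : ∀ i, i < s → ∃ w, E.getD i 0 = p ^ w := by
      intro i hi
      apply FFWparts_mem p (p.digits k) 0
      rw [← hE, List.getD_eq_getElem _ _ (hEs ▸ hi)]
      exact List.getElem_mem _
    set T : Finset ℕ := (Finset.range s).image Nat.succ with hT
    set d₀ : ℕ →₀ ℕ := ∑ i ∈ T, Finsupp.single i (E.getD (i - 1) 0) with hd₀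
    have happ : ∀ j, d₀ j = if j ∈ T then E.getD (j - 1) 0 else 0 := by
      intro j
      rw [hd₀, sum_single_apply]
    have hTmem : ∀ j ∈ T, j - 1 < s ∧ 1 ≤ j := by
      intro j hj
      rw [hT] at hj
      simp only [Finset.mem_image, Finset.mem_range] at hj
      obtain ⟨i, hi, rfl⟩ := hj
      omega
    have hpos : ∀ j ∈ T, 0 < E.getD (j - 1) 0 := by
      intro j hj
      obtain ⟨w, hw⟩ := hmem _ (hTmem j hj).1
      rw [hw]
      exact pow_pos (Fact.out : p.Prime).pos w
    have hsupport : d₀.support = T := by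
      ext j
      rw [Finsupp.mem_support_iff, happ]
      by_cases hj : j ∈ T
      · simp only [hj, if_pos, iff_true]
        exact (hpos j hj).ne'
      · simp [hj]
    have h0T : (0 : ℕ) ∉ T := by
      rw [hT]
      simp only [Finset.mem_image, Finset.mem_range]
      rintro ⟨i, -, hi⟩
      exact Nat.succ_ne_zero i hi
    have herase : d₀.support.erase 0 = d₀.support := by
      rw [hsupport]
      exact Finset.erase_eq_of_notMem h0T
    have himg : (d₀.support.erase 0).image Nat.pred = Finset.range s := by
      rw [herase, hsupport, hT, Finset.image_image]
      have : Nat.pred ∘ Nat.succ = id := funext fun x => Nat.pred_succ x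
      rw [this, Finset.image_id]
    have hsuminj : ∀ (g : ℕ → ℕ), ∑ j ∈ T, g j = ∑ i ∈ Finset.range s, g (i + 1) := by
      intro g
      rw [hT, Finset.sum_image (fun x _ y _ h => Nat.succ_injective h)]
    have happ' : ∀ i ∈ Finset.range s, d₀ (i + 1) = E.getD i 0 := by
      intro i hi
      rw [happ, if_pos (by rw [hT]; exact Finset.mem_image_of_mem _ hi), Nat.add_sub_cancel]
    have hsum : (d₀.sum fun _ n => n) = k := by
      have h1 : (d₀.sum fun _ n => n) = ∑ j ∈ d₀.support, d₀ j := rfl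
      rw [h1, hsupport, hsuminj fun j => d₀ j,
        Finset.sum_congr rfl happ', ← hEs, sum_range_getD, hEsum]
    have hdig : ∑ j ∈ d₀.support, (p.digits (d₀ j)).sum = s := by
      rw [hsupport, hsuminj fun j => (p.digits (d₀ j)).sum]
      have : ∀ i ∈ Finset.range s, (p.digits (d₀ (i + 1))).sum = 1 := by
        intro i hi
        rw [happ' i hi]
        obtain ⟨w, hw⟩ := hmem i (Finset.mem_range.1 hi)
        rw [hw, digitSum_pow]
      rw [Finset.sum_congr rfl this, Finset.sum_const, smul_eq_mul, mul_one, Finset.card_range]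
    have hnd : ¬ p ∣ Nat.multinomial d₀.support ⇑d₀ := by
      rw [dvd_multinomial_iff]
      simp only [ne_eq, not_not]
      have : ∑ i ∈ d₀.support, d₀ i = k := by rw [← hsum]; rfl
      rw [this, ← hs, hdig]
    intro hzero
    have hcoeff : MvPolynomial.coeff d₀
        (iterDiff F ((MvPolynomial.X 0 : MvPolynomial ℕ (Polynomial F)) ^ k) s) = 0 := by
      rw [hzero, MvPolynomial.coeff_zero]
    rw [coeff_iterDiff, if_pos ⟨hsum, himg⟩] at hcoeff
    exact hnd ((CharP.cast_eq_zero_iff (Polynomial F) p _).1 hcoeff)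
  · -- zero part
    apply MvPolynomial.ext
    intro d
    rw [coeff_iterDiff, MvPolynomial.coeff_zero]
    split
    case isFalse => rfl
    case isTrue hcond =>
      obtain ⟨hsum, himg⟩ := hcond
      apply (CharP.cast_eq_zero_iff (Polynomial F) p _).2
      rw [dvd_multinomial_iff]
      have hk' : ∑ i ∈ d.support, d i = k := by rw [← hsum]; rfl
      rw [hk', ← hs]
      have hcard : (d.support.erase 0).card = s + 1 := by
        rw [← Finset.card_range (s + 1), ← himg]
        rw [Finset.card_image_of_injOn]
        intro x hx y hy hxy
        simp only [Finset.mem_coe, Finset.mem_erase] at hx hy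
        rw [Nat.pred_eq_sub_one, Nat.pred_eq_sub_one] at hxy
        omega
      have hge : s + 1 ≤ ∑ i ∈ d.support, (p.digits (d i)).sum := by
        calc s + 1 = ∑ _i ∈ d.support.erase 0, 1 := by
              rw [Finset.sum_const, smul_eq_mul, mul_one, hcard]
          _ ≤ ∑ i ∈ d.support.erase 0, (p.digits (d i)).sum := by
              apply Finset.sum_le_sum
              intro i hi
              have hi' : i ∈ d.support := Finset.mem_of_mem_erase hi
              exact one_le_digitSum (Nat.one_le_iff_ne_zero.2 (Finsupp.mem_support_iff.1 hi'))
          _ ≤ ∑ i ∈ d.support, (p.digits (d i)).sum := by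
              apply Finset.sum_le_sum_of_subset (Finset.erase_subset 0 d.support)
      omega

end FFW
end
end
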